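/- Let n ≥ 2 and let (T, A(T), B(T)) be a clean d-sparse signed tree model of an n-vertex finite simple graph G. Then G admits a 4·d·(log₂ n)²-sparse signed tree model (R, A(R), B(R)) of depth ⌈log₂ n⌉ + 1, where R is the full complete binary rooted tree with n leaves. -/

import Mathlib

/-- `G` has degeneracy at most `d`: every nonempty (induced) subgraph has a vertex of degree
at most `d`. -/
def DegenLE {V : Type*} (G : SimpleGraph V) (d : ℕ) : Prop :=
  ∀ s : Set V, s.Nonempty → ∃ v ∈ s, (G.neighborSet v ∩ s).ncard ≤ d

/-- Full rooted binary trees: every internal node has exactly two children. -/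
inductive BinTree where
  | leaf : BinTree
  | node : BinTree → BinTree → BinTree
deriving DecidableEq

namespace BinTree

/-- The subtree of a binary tree rooted at the node addressed by the path `p` from the root
(`false` = go to the left child, `true` = go to the right child), if it exists. -/
def subtreeAt : BinTree → List Bool → Option BinTree
  | t, [] => some t
  | leaf, _ :: _ => none
  | node l _, false :: p => l.subtreeAt p
  | node _ r, true :: p => r.subtreeAt p

/-- `p` addresses a node of `T`. -/
def IsNode (T : BinTree) (p : List Bool) : Prop := (T.subtreeAt p).isSome

/-- `p` addresses a leaf of `T`. -/
def IsLeafPos (T : BinTree) (p : List Bool) : Prop := T.subtreeAt p = some leaf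

/-- The depth of a binary tree: the maximum number of nodes on a root-to-leaf path. -/
def depth : BinTree → ℕ
  | leaf => 1
  | node l r => max l.depth r.depth + 1

/-- The total number of nodes of a binary tree. -/
def numNodes : BinTree → ℕ
  | leaf => 1
  | node l r => l.numNodes + r.numNodes + 1

/-- The list of (addresses of) leaves of a binary tree, read from left to right. -/
def leaves : BinTree → List (List Bool)
  | leaf => [[]]
  | node l r => l.leaves.map (false :: ·) ++ r.leaves.map (true :: ·)

/-- A binary tree is perfect if all its leaves are at the same depth. -/
def IsPerfect : BinTree → Prop
  | leaf => True
  | node l r => l.IsPerfect ∧ r.IsPerfect ∧ l.depth = r.depth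

/-- A binary tree is complete if all its levels are completely filled, except possibly the
last one, wherein leaves are left-aligned. -/
inductive IsComplete : BinTree → Prop
  | leaf : IsComplete leaf
  | nodeLeft (l r : BinTree) : IsComplete l → r.IsPerfect → l.depth = r.depth + 1 →
      IsComplete (node l r)
  | nodeRight (l r : BinTree) : l.IsPerfect → IsComplete r → l.depth = r.depth →
      IsComplete (node l r)

/-- With the leaves of `T` numbered `1, …, n` from left to right, `T.leafSet x` is the set of
numbers of the leaves of the subtree of `T` rooted at `x`. -/
def leafSet (T : BinTree) (x : List Bool) : Set ℕ :=
  {k | 1 ≤ k ∧ k ≤ T.leaves.length ∧ x <+: T.leaves.getD (k - 1) []}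

end BinTree

/-- Node addresses in a binary tree. -/
abbrev Pos := List Bool

/-- `u` is a strict ancestor of `v` (as tree addresses: a strict prefix). -/
def SAnc (u v : Pos) : Prop := u <+: v ∧ u ≠ v

/-- `{u, v}` is a transversal pair of `T`: both are nodes of `T` and neither is an ancestor
of the other. -/
def Transversal (T : BinTree) (u v : Pos) : Prop :=
  T.IsNode u ∧ T.IsNode v ∧ ¬ u <+: v ∧ ¬ v <+: u

/-- The ancestor relation on unordered pairs: `{u, v} ⪯ {u', v'}`. -/
def PairLE (u v u' v' : Pos) : Prop :=
  (u <+: u' ∧ v <+: v') ∨ (v <+: u' ∧ u <+: v')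

/-- A signed tree model: a full binary rooted tree `T` together with disjoint sets `A`
(transversal anti-edges) and `B` (transversal edges) of transversal pairs of `T`, no two of
which cross. -/
structure STM where
  tree : BinTree
  A : Set (Sym2 Pos)
  B : Set (Sym2 Pos)
  disjAB : Disjoint A B
  transversal : ∀ e ∈ A ∪ B, ∀ u v : Pos, e = s(u, v) → Transversal tree u v
  noCross : ∀ e ∈ A ∪ B, ∀ e' ∈ A ∪ B, ∀ u v u' v' : Pos,
    e = s(u, v) → e' = s(u', v') → ¬ (SAnc u u' ∧ SAnc v' v)

namespace STM

/-- The adjacency relation defined by a signed tree model on the leaves of its tree: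
leaves `u, v` are adjacent iff there is `{u', v'} ∈ B` with `{u', v'} ⪯ {u, v}` and no
`{u'', v''} ∈ A` satisfies `{u', v'} ≺ {u'', v''} ⪯ {u, v}`. -/
def LeafAdj (M : STM) (u v : Pos) : Prop :=
  M.tree.IsLeafPos u ∧ M.tree.IsLeafPos v ∧
  ∃ u' v' : Pos, s(u', v') ∈ M.B ∧ PairLE u' v' u v ∧
    ¬ ∃ u'' v'' : Pos, s(u'', v'') ∈ M.A ∧ PairLE u' v' u'' v'' ∧
      s(u', v') ≠ s(u'', v'') ∧ PairLE u'' v'' u v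

/-- `M` is a signed tree model of the graph `G`: there is a bijection between the vertices of
`G` and the leaves of the tree of `M` under which adjacency in `G` coincides with the
adjacency defined by `M`. -/
def Models {V : Type*} (M : STM) (G : SimpleGraph V) : Prop :=
  ∃ f : V → Pos, Function.Injective f ∧ (∀ v, M.tree.IsLeafPos (f v)) ∧
    (∀ p : Pos, M.tree.IsLeafPos p → ∃ v, f v = p) ∧
    ∀ u v : V, G.Adj u v ↔ M.LeafAdj (f u) (f v)

/-- The auxiliary graph of a signed tree model: vertex set the nodes of the tree, edge set
`A ∪ B`. -/
def auxGraph (M : STM) : SimpleGraph Pos where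
  Adj u v := u ≠ v ∧ s(u, v) ∈ M.A ∪ M.B
  symm := ⟨by
    rintro u v ⟨h1, h2⟩
    exact ⟨h1.symm, by rwa [Sym2.eq_swap]⟩⟩
  loopless := ⟨fun u h => h.1 rfl⟩

/-- The width of a signed tree model is at most `d`: the graph on the nodes of the tree with
edge set `A ∪ B` has degeneracy at most `d`. -/
def WidthLE (M : STM) (d : ℕ) : Prop := DegenLE M.auxGraph d

/-- A signed tree model is clean if every pair of siblings is in `A ∪ B`. -/
def Clean (M : STM) : Prop :=
  ∀ p : Pos, M.tree.IsNode (p ++ [false]) →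
    s(p ++ [false], p ++ [true]) ∈ M.A ∪ M.B

end STM

/-!
Let `R` be the complete tree with as many leaves as `T`, the leaves of the two trees being
matched by rank. The leaves below a node `u` of `T` form an interval, which is tiled by the leaf
sets of its canonical nodes in `R` (the pieces of `u`); there are at most `2 log₂ n` of them. Each
pair `{u, v}` of `A ∪ B` is replaced by all pairs of a piece of `u` and a piece of `v`, a pair of
`R` taking the sign of the greatest pair of `T` it comes from. Pieces are monotone in `u`, so the
greatest pair below two leaves of `R` is the image of the greatest pair below the matching leaves
of `T`, with the same sign: adjacency is preserved. Each pair of `T` yields at most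
`(2 log₂ n)²` pairs of `R`, and both trees have `2n - 1` nodes.
-/

namespace BinTree

def numLeaves : BinTree → ℕ
  | leaf => 1
  | node l r => l.numLeaves + r.numLeaves

lemma one_le_numLeaves (T : BinTree) : 1 ≤ T.numLeaves := by
  induction T with
  | leaf => rfl
  | node l r ihl _ => simp only [numLeaves]; omega

lemma length_leaves (T : BinTree) : T.leaves.length = T.numLeaves := by
  induction T with
  | leaf => rfl
  | node l r ihl ihr => simp [leaves, numLeaves, ihl, ihr]

lemma numNodes_eq (T : BinTree) : T.numNodes = 2 * T.numLeaves - 1 := by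
  induction T with
  | leaf => rfl
  | node l r ihl ihr =>
    have := l.one_le_numLeaves
    have := r.one_le_numLeaves
    simp only [numNodes, numLeaves, ihl, ihr]
    omega

lemma one_le_depth (T : BinTree) : 1 ≤ T.depth := by
  cases T <;> simp [depth]

lemma IsPerfect.isComplete {T : BinTree} (h : T.IsPerfect) : T.IsComplete := by
  induction T with
  | leaf => exact .leaf
  | node l r _ ihr => exact .nodeRight l r h.1 (ihr h.2.1) h.2.2

/-- The perfect tree of height `k` whose `j` leftmost leaves are replaced by cherries; for
`j ≤ 2 ^ k` it is the complete tree with `2 ^ k + j` leaves. -/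
def perfectSplit : ℕ → ℕ → BinTree
  | 0, 0 => leaf
  | 0, _ + 1 => node leaf leaf
  | k + 1, j => node (perfectSplit k (min j (2 ^ k))) (perfectSplit k (j - 2 ^ k))

lemma numLeaves_perfectSplit {k j : ℕ} (hj : j ≤ 2 ^ k) :
    (perfectSplit k j).numLeaves = 2 ^ k + j := by
  induction k generalizing j with
  | zero => rcases j with _ | _ | _ <;> simp_all [perfectSplit, numLeaves]
  | succ k ih =>
    rw [pow_succ] at hj ⊢
    rw [perfectSplit, numLeaves, ih (min_le_right _ _), ih (by omega)]
    omega

lemma depth_perfectSplit (k j : ℕ) :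
    (perfectSplit k j).depth = if j = 0 then k + 1 else k + 2 := by
  induction k generalizing j with
  | zero => rcases j with _ | _ <;> simp [perfectSplit, depth]
  | succ k ih =>
    have := Nat.two_pow_pos k
    rw [perfectSplit, depth, ih, ih]
    split_ifs <;> omega

lemma isPerfect_perfectSplit_zero (k : ℕ) : (perfectSplit k 0).IsPerfect := by
  induction k with
  | zero => trivial
  | succ k ih => simpa [perfectSplit, IsPerfect] using ih

lemma isPerfect_perfectSplit_two_pow (k : ℕ) : (perfectSplit k (2 ^ k)).IsPerfect := by
  induction k with
  | zero => exact ⟨trivial, trivial, rfl⟩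
  | succ k ih =>
    have h : min (2 ^ (k + 1)) (2 ^ k) = 2 ^ k ∧ 2 ^ (k + 1) - 2 ^ k = 2 ^ k := by
      rw [pow_succ]; omega
    rw [perfectSplit, h.1, h.2]
    exact ⟨ih, ih, rfl⟩

lemma isComplete_perfectSplit {k j : ℕ} (hj : j ≤ 2 ^ k) : (perfectSplit k j).IsComplete := by
  induction k generalizing j with
  | zero =>
    rcases j with _ | _ | _
    · exact .leaf
    · exact .nodeRight leaf leaf trivial .leaf rfl
    · simp at hj
  | succ k ih =>
    rcases Nat.eq_zero_or_pos j with rfl | hj0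
    · exact (isPerfect_perfectSplit_zero (k + 1)).isComplete
    rw [pow_succ] at hj
    rw [perfectSplit]
    by_cases hjk : j ≤ 2 ^ k
    · rw [min_eq_left hjk, Nat.sub_eq_zero_of_le hjk]
      exact .nodeLeft _ _ (ih hjk) (isPerfect_perfectSplit_zero k)
        (by simp [depth_perfectSplit, hj0.ne'])
    · rw [min_eq_right (by omega)]
      exact .nodeRight _ _ (isPerfect_perfectSplit_two_pow k) (ih (by omega))
        (by simp [depth_perfectSplit]; omega)

lemma exists_isComplete {n : ℕ} (hn : 2 ≤ n) :
    ∃ R : BinTree, R.IsComplete ∧ R.numLeaves = n ∧ R.depth = Nat.clog 2 n + 1 := by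
  have hc := Nat.clog_pos one_lt_two hn
  have hlt := Nat.pow_pred_clog_lt_self one_lt_two hn
  rw [Nat.pred_eq_sub_one] at hlt
  have hle := Nat.le_pow_clog one_lt_two n
  set c := Nat.clog 2 n
  have hj : n - 2 ^ (c - 1) ≤ 2 ^ (c - 1) := by
    rw [show c = c - 1 + 1 by omega, pow_succ] at hle
    omega
  refine ⟨perfectSplit (c - 1) (n - 2 ^ (c - 1)), isComplete_perfectSplit hj,
    by rw [numLeaves_perfectSplit hj]; omega, ?_⟩
  rw [depth_perfectSplit, if_neg (by omega)]
  omega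

def leafPos : BinTree → ℕ → Pos
  | leaf, _ => []
  | node l r, k =>
    if k < l.numLeaves then false :: l.leafPos k else true :: r.leafPos (k - l.numLeaves)

def leafStart : BinTree → Pos → ℕ
  | _, [] => 0
  | leaf, _ :: _ => 0
  | node l _, false :: p => l.leafStart p
  | node l r, true :: p => l.numLeaves + r.leafStart p

def leafCount (T : BinTree) (p : Pos) : ℕ := ((T.subtreeAt p).getD leaf).numLeaves

@[simp] lemma leafCount_nil (T : BinTree) : T.leafCount [] = T.numLeaves := by
  simp [leafCount, subtreeAt]

@[simp] lemma leafCount_node_false (l r : BinTree) (p : Pos) :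
    (node l r).leafCount (false :: p) = l.leafCount p := rfl

@[simp] lemma leafCount_node_true (l r : BinTree) (p : Pos) :
    (node l r).leafCount (true :: p) = r.leafCount p := rfl

lemma one_le_leafCount (T : BinTree) (p : Pos) : 1 ≤ T.leafCount p := one_le_numLeaves _

lemma not_isNode_leaf_cons (b : Bool) (p : Pos) : ¬ leaf.IsNode (b :: p) := by
  simp [IsNode, subtreeAt]

lemma isLeafPos_leafPos {T : BinTree} {k : ℕ} (hk : k < T.numLeaves) :
    T.IsLeafPos (T.leafPos k) := by
  induction T generalizing k with
  | leaf => rfl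
  | node l r ihl ihr =>
    simp only [numLeaves] at hk
    by_cases h : k < l.numLeaves
    · simpa [leafPos, h, IsLeafPos, subtreeAt] using ihl h
    · simpa [leafPos, h, IsLeafPos, subtreeAt] using ihr (k := k - l.numLeaves) (by omega)

lemma leafStart_add_leafCount_le {T : BinTree} {x : Pos} (hx : T.IsNode x) :
    T.leafStart x + T.leafCount x ≤ T.numLeaves := by
  induction x generalizing T with
  | nil => simp [leafStart]
  | cons b x ih =>
    cases T with
    | leaf => exact absurd hx (not_isNode_leaf_cons b x)
    | node l r =>
      cases b
      · have := ih (T := l) hx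
        simp only [leafStart, leafCount_node_false, numLeaves]; omega
      · have := ih (T := r) hx
        simp only [leafStart, leafCount_node_true, numLeaves]; omega

lemma prefix_leafPos_iff {T : BinTree} {x : Pos} (hx : T.IsNode x) {k : ℕ} :
    x <+: T.leafPos k ∧ k < T.numLeaves ↔
      T.leafStart x ≤ k ∧ k < T.leafStart x + T.leafCount x := by
  induction x generalizing T k with
  | nil => simp [leafStart]
  | cons b x ih =>
    cases T with
    | leaf => exact absurd hx (not_isNode_leaf_cons b x)
    | node l r =>
      cases b
      · have hle := leafStart_add_leafCount_le (T := l) hx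
        by_cases h : k < l.numLeaves
        · simpa [leafPos, leafStart, numLeaves, h, Nat.lt_add_right] using ih (T := l) hx (k := k)
        · simp [leafPos, leafStart, h]
          omega
      · have := ih (T := r) hx (k := k - l.numLeaves)
        by_cases h : k < l.numLeaves
        · simp [leafPos, leafStart, h]
          omega
        · simp only [leafPos, h, if_false, List.cons_prefix_cons, true_and, leafStart,
            leafCount_node_true, numLeaves]
          rw [show k < l.numLeaves + r.numLeaves ↔ k - l.numLeaves < r.numLeaves by omega, this]
          omega

lemma IsNode.of_prefix {T : BinTree} {p q : Pos} (hq : T.IsNode q) (h : p <+: q) :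
    T.IsNode p := by
  induction p generalizing T q with
  | nil => simp [IsNode, subtreeAt]
  | cons b p ih =>
    obtain ⟨t, rfl⟩ := h
    cases T with
    | leaf => exact absurd hq (not_isNode_leaf_cons b _)
    | node l r => cases b <;> exact ih hq (List.prefix_append p t)

lemma IsLeafPos.isNode {T : BinTree} {p : Pos} (h : T.IsLeafPos p) : T.IsNode p := by
  rw [IsNode, h]; rfl

lemma IsLeafPos.eq_of_prefix {T : BinTree} {p q : Pos} (hp : T.IsLeafPos p) (hq : T.IsNode q)
    (h : p <+: q) : q = p := by
  induction p generalizing T q with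
  | nil =>
    obtain rfl : T = leaf := by simpa [IsLeafPos, subtreeAt] using hp
    cases q with
    | nil => rfl
    | cons b q => exact absurd hq (not_isNode_leaf_cons b q)
  | cons b p ih =>
    obtain ⟨t, rfl⟩ := h
    cases T with
    | leaf => exact absurd hp.isNode (not_isNode_leaf_cons b p)
    | node l r => cases b <;> exact congrArg _ (ih hp hq (List.prefix_append p t))

lemma leafCount_of_isLeafPos {T : BinTree} {p : Pos} (h : T.IsLeafPos p) : T.leafCount p = 1 := by
  rw [leafCount, h]; rfl

lemma leafStart_leafPos {T : BinTree} {k : ℕ} (hk : k < T.numLeaves) :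
    T.leafStart (T.leafPos k) = k := by
  have h := isLeafPos_leafPos hk
  have := (prefix_leafPos_iff h.isNode).mp ⟨List.prefix_refl _, hk⟩
  rw [leafCount_of_isLeafPos h] at this
  omega

lemma IsLeafPos.leafPos_leafStart {T : BinTree} {p : Pos} (h : T.IsLeafPos p) :
    T.leafStart p < T.numLeaves ∧ T.leafPos (T.leafStart p) = p := by
  have hk := (prefix_leafPos_iff h.isNode (k := T.leafStart p)).mpr
    ⟨le_rfl, by simp [leafCount_of_isLeafPos h]⟩
  exact ⟨hk.2, h.eq_of_prefix (isLeafPos_leafPos hk.2).isNode hk.1⟩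

lemma prefix_or_prefix_of_mem_leafInterval {T : BinTree} {u v : Pos} (hu : T.IsNode u)
    (hv : T.IsNode v) {k : ℕ} (hku : T.leafStart u ≤ k ∧ k < T.leafStart u + T.leafCount u)
    (hkv : T.leafStart v ≤ k ∧ k < T.leafStart v + T.leafCount v) : u <+: v ∨ v <+: u :=
  List.prefix_or_prefix_of_prefix ((prefix_leafPos_iff hu).mpr hku).1
    ((prefix_leafPos_iff hv).mpr hkv).1

lemma leafInterval_disjoint {T : BinTree} {u v : Pos} (hu : T.IsNode u) (hv : T.IsNode v)
    (huv : ¬ u <+: v) (hvu : ¬ v <+: u) :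
    T.leafStart u + T.leafCount u ≤ T.leafStart v ∨
      T.leafStart v + T.leafCount v ≤ T.leafStart u := by
  have := T.one_le_leafCount u
  have := T.one_le_leafCount v
  by_contra! h
  have := prefix_or_prefix_of_mem_leafInterval hu hv (k := max (T.leafStart u) (T.leafStart v))
    (by omega) (by omega)
  tauto

lemma leafInterval_mono {T : BinTree} {p q : Pos} (hq : T.IsNode q) (h : p <+: q) :
    T.leafStart p ≤ T.leafStart q ∧
      T.leafStart q + T.leafCount q ≤ T.leafStart p + T.leafCount p := by
  have hp := hq.of_prefix h
  have := T.one_le_leafCount q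
  have h₁ := (prefix_leafPos_iff hq (k := T.leafStart q)).mpr (by omega)
  have h₂ := (prefix_leafPos_iff hq (k := T.leafStart q + T.leafCount q - 1)).mpr (by omega)
  have := (prefix_leafPos_iff hp).mp ⟨h.trans h₁.1, h₁.2⟩
  have := (prefix_leafPos_iff hp).mp ⟨h.trans h₂.1, h₂.2⟩
  omega

lemma length_lt_depth_of_isNode {T : BinTree} {p : Pos} (h : T.IsNode p) : p.length < T.depth := by
  induction p generalizing T with
  | nil => exact T.one_le_depth
  | cons b p ih =>
    cases T with
    | leaf => exact absurd h (not_isNode_leaf_cons b p)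
    | node l r =>
      cases b
      · have := ih (T := l) h; simp only [depth, List.length_cons]; omega
      · have := ih (T := r) h; simp only [depth, List.length_cons]; omega

lemma finite_setOf_isNode (T : BinTree) : {p | T.IsNode p}.Finite :=
  (List.finite_length_le Bool T.depth).subset fun _ hp => (length_lt_depth_of_isNode hp).le

/-- The canonical decomposition of the leaf interval `[s, e)` into maximal subtrees. -/
def canonicalNodes : BinTree → ℕ → ℕ → List Pos
  | leaf, s, e => if s = 0 ∧ 1 ≤ e then [[]] else []
  | node l r, s, e =>
    if e ≤ s ∨ l.numLeaves + r.numLeaves ≤ s then []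
    else if s = 0 ∧ l.numLeaves + r.numLeaves ≤ e then [[]]
    else (l.canonicalNodes s e).map (false :: ·) ++
      (r.canonicalNodes (s - l.numLeaves) (e - l.numLeaves)).map (true :: ·)

lemma canonicalNodes_eq_nil {T : BinTree} {s e : ℕ} (h : e ≤ s ∨ T.numLeaves ≤ s) :
    T.canonicalNodes s e = [] := by
  cases T with
  | leaf => simp only [numLeaves] at h; rw [canonicalNodes, if_neg (by omega)]
  | node l r => rw [canonicalNodes, if_pos (by simpa only [numLeaves] using h)]

lemma canonicalNodes_zero {T : BinTree} {e : ℕ} (h : T.numLeaves ≤ e) :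
    T.canonicalNodes 0 e = [[]] := by
  have := T.one_le_numLeaves
  cases T with
  | leaf => simp only [numLeaves] at h; rw [canonicalNodes, if_pos ⟨rfl, h⟩]
  | node l r => rw [canonicalNodes, if_neg (by simp only [numLeaves] at *; omega), if_pos ⟨rfl, h⟩]

lemma canonicalNodes_node {l r : BinTree} {s e : ℕ} (hs : s < e)
    (hs' : s < l.numLeaves + r.numLeaves) (hse : ¬ (s = 0 ∧ l.numLeaves + r.numLeaves ≤ e)) :
    (node l r).canonicalNodes s e = (l.canonicalNodes s e).map (false :: ·) ++
      (r.canonicalNodes (s - l.numLeaves) (e - l.numLeaves)).map (true :: ·) := by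
  rw [canonicalNodes, if_neg (by omega), if_neg hse]

lemma mem_canonicalNodes {T : BinTree} {s e : ℕ} {x : Pos} (hx : x ∈ T.canonicalNodes s e) :
    T.IsNode x ∧ s ≤ T.leafStart x ∧ T.leafStart x + T.leafCount x ≤ e := by
  induction T generalizing s e x with
  | leaf =>
    rw [canonicalNodes] at hx
    split_ifs at hx with h
    · obtain rfl := List.mem_singleton.mp hx
      exact ⟨rfl, by simp [leafStart, numLeaves]; omega⟩
    · simp at hx
  | node l r ihl ihr =>
    by_cases h₁ : e ≤ s ∨ l.numLeaves + r.numLeaves ≤ s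
    · simp [canonicalNodes_eq_nil (T := node l r) h₁] at hx
    by_cases h₂ : s = 0 ∧ l.numLeaves + r.numLeaves ≤ e
    · rw [h₂.1, canonicalNodes_zero h₂.2, List.mem_singleton] at hx
      subst hx
      exact ⟨rfl, by simp [leafStart, numLeaves]; omega⟩
    rw [canonicalNodes_node (by omega) (by omega) h₂] at hx
    simp only [List.mem_append, List.mem_map] at hx
    rcases hx with ⟨y, hy, rfl⟩ | ⟨y, hy, rfl⟩
    · obtain ⟨hn, h⟩ := ihl hy
      exact ⟨hn, by simpa [leafStart] using h⟩
    · obtain ⟨hn, h⟩ := ihr hy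
      have := r.one_le_leafCount y
      exact ⟨hn, by simp only [leafStart, leafCount_node_true]; omega⟩

lemma exists_mem_canonicalNodes_prefix {T : BinTree} {s e k : ℕ} (hk : k < T.numLeaves)
    (hs : s ≤ k) (he : k < e) : ∃ x ∈ T.canonicalNodes s e, x <+: T.leafPos k := by
  induction T generalizing s e k with
  | leaf => exact ⟨[], by simp [canonicalNodes, numLeaves] at *; omega, List.nil_prefix⟩
  | node l r ihl ihr =>
    simp only [numLeaves] at hk
    by_cases h : s = 0 ∧ l.numLeaves + r.numLeaves ≤ e
    · rw [h.1, canonicalNodes_zero h.2]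
      exact ⟨[], List.mem_singleton_self _, List.nil_prefix⟩
    rw [canonicalNodes_node (by omega) (by omega) h]
    by_cases hkl : k < l.numLeaves
    · obtain ⟨x, hx, hxk⟩ := ihl hkl hs he
      exact ⟨false :: x, by simp [hx], by simpa [leafPos, hkl] using hxk⟩
    · obtain ⟨x, hx, hxk⟩ := ihr (s := s - l.numLeaves) (e := e - l.numLeaves)
        (k := k - l.numLeaves) (by omega) (by omega) (by omega)
      exact ⟨true :: x, by simp [hx], by simpa [leafPos, hkl] using hxk⟩

lemma not_le_of_mem_canonicalNodes {T : BinTree} {s e : ℕ} {x q : Pos}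
    (hx : x ∈ T.canonicalNodes s e) (hqx : SAnc q x) :
    ¬ (s ≤ T.leafStart q ∧ T.leafStart q + T.leafCount q ≤ e) := by
  induction T generalizing s e x q with
  | leaf =>
    rw [canonicalNodes] at hx
    split_ifs at hx
    · obtain rfl := List.mem_singleton.mp hx
      exact absurd (List.prefix_nil.mp hqx.1) hqx.2
    · simp at hx
  | node l r ihl ihr =>
    by_cases h₁ : e ≤ s ∨ l.numLeaves + r.numLeaves ≤ s
    · simp [canonicalNodes_eq_nil (T := node l r) h₁] at hx
    by_cases h₂ : s = 0 ∧ l.numLeaves + r.numLeaves ≤ e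
    · rw [h₂.1, canonicalNodes_zero h₂.2, List.mem_singleton] at hx
      subst hx
      exact absurd (List.prefix_nil.mp hqx.1) hqx.2
    rw [canonicalNodes_node (by omega) (by omega) h₂] at hx
    simp only [List.mem_append, List.mem_map] at hx
    rcases q with _ | ⟨b, q⟩
    · simp only [leafStart, leafCount_nil, numLeaves]; omega
    rcases hx with ⟨y, hy, rfl⟩ | ⟨y, hy, rfl⟩ <;>
      obtain ⟨rfl, hqy⟩ := List.cons_prefix_cons.mp hqx.1
    · simpa [leafStart] using ihl hy ⟨hqy, by simpa using hqx.2⟩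
    · have := r.one_le_leafCount q
      have := ihr hy ⟨hqy, by simpa using hqx.2⟩
      simp only [leafStart, leafCount_node_true]
      omega

lemma length_canonicalNodes_eq_zero {T : BinTree} {s e : ℕ} (h : e ≤ s ∨ T.numLeaves ≤ s) :
    (T.canonicalNodes s e).length = 0 := by
  rw [canonicalNodes_eq_nil h, List.length_nil]

lemma length_canonicalNodes_zero {T : BinTree} {e : ℕ} (h : T.numLeaves ≤ e) :
    (T.canonicalNodes 0 e).length = 1 := by
  rw [canonicalNodes_zero h, List.length_singleton]

lemma length_canonicalNodes_suffix_le {T : BinTree} {s e : ℕ} (hs : 0 < s)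
    (he : T.numLeaves ≤ e) : (T.canonicalNodes s e).length ≤ T.depth - 1 := by
  induction T generalizing s e with
  | leaf => simp [length_canonicalNodes_eq_zero (T := leaf) (Or.inr hs)]
  | node l r ihl ihr =>
    simp only [numLeaves] at he
    by_cases h : l.numLeaves + r.numLeaves ≤ s
    · simp [length_canonicalNodes_eq_zero (T := node l r) (Or.inr h)]
    rw [canonicalNodes_node (by omega) (by omega) (by omega), List.length_append,
      List.length_map, List.length_map]
    have hl₀ : l.numLeaves ≤ s → (l.canonicalNodes s e).length = 0 :=
      fun h => length_canonicalNodes_eq_zero (.inr h)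
    have hl : s < l.numLeaves → (l.canonicalNodes s e).length ≤ l.depth - 1 :=
      fun _ => ihl hs (by omega)
    have hr₁ : s ≤ l.numLeaves →
        (r.canonicalNodes (s - l.numLeaves) (e - l.numLeaves)).length = 1 :=
      fun h => by rw [Nat.sub_eq_zero_of_le h]; exact length_canonicalNodes_zero (by omega)
    have hr : l.numLeaves < s →
        (r.canonicalNodes (s - l.numLeaves) (e - l.numLeaves)).length ≤ r.depth - 1 :=
      fun _ => ihr (by omega) (by omega)
    have := l.one_le_depth
    have := r.one_le_depth
    simp only [depth]
    omega

lemma length_canonicalNodes_prefix_le {T : BinTree} {e : ℕ} (he : e < T.numLeaves) :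
    (T.canonicalNodes 0 e).length ≤ T.depth - 1 := by
  induction T generalizing e with
  | leaf =>
    simp only [numLeaves, Nat.lt_one_iff] at he
    simp [he, length_canonicalNodes_eq_zero (T := leaf) (s := 0) (e := 0) (.inl le_rfl)]
  | node l r ihl ihr =>
    simp only [numLeaves] at he
    rcases Nat.eq_zero_or_pos e with rfl | he₀
    · simp [length_canonicalNodes_eq_zero (T := node l r) (s := 0) (e := 0) (.inl le_rfl)]
    rw [canonicalNodes_node he₀ (by omega) (by omega), List.length_append,
      List.length_map, List.length_map, Nat.zero_sub]
    have hl₁ : l.numLeaves ≤ e → (l.canonicalNodes 0 e).length = 1 :=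
      length_canonicalNodes_zero
    have hl : e < l.numLeaves → (l.canonicalNodes 0 e).length ≤ l.depth - 1 := ihl
    have hr₀ : e ≤ l.numLeaves → (r.canonicalNodes 0 (e - l.numLeaves)).length = 0 :=
      fun h => length_canonicalNodes_eq_zero (.inl (by omega))
    have hr : l.numLeaves < e → (r.canonicalNodes 0 (e - l.numLeaves)).length ≤ r.depth - 1 :=
      fun _ => ihr (by omega)
    have := l.one_le_depth
    have := r.one_le_depth
    simp only [depth]
    omega

/-- A proper prefix or suffix of the leaves has at most one canonical node per level below the
root, and any other interval splits into a suffix of a left subtree and a prefix of its sibling. -/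
lemma length_canonicalNodes_le (T : BinTree) (s e : ℕ) :
    (T.canonicalNodes s e).length ≤ max 1 (2 * (T.depth - 2)) := by
  induction T generalizing s e with
  | leaf => simp only [canonicalNodes]; split_ifs <;> simp
  | node l r ihl ihr =>
    by_cases h₁ : e ≤ s ∨ l.numLeaves + r.numLeaves ≤ s
    · simp [length_canonicalNodes_eq_zero (T := node l r) h₁]
    by_cases h₂ : s = 0 ∧ l.numLeaves + r.numLeaves ≤ e
    · rw [h₂.1, length_canonicalNodes_zero h₂.2]; omega
    rw [canonicalNodes_node (by omega) (by omega) h₂, List.length_append,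
      List.length_map, List.length_map]
    have hl₀ : l.numLeaves ≤ s → (l.canonicalNodes s e).length = 0 :=
      fun h => length_canonicalNodes_eq_zero (.inr h)
    have hl₁ : s = 0 → l.numLeaves ≤ e → (l.canonicalNodes s e).length = 1 :=
      fun hs h => hs ▸ length_canonicalNodes_zero h
    have hl₂ : 0 < s → l.numLeaves ≤ e → (l.canonicalNodes s e).length ≤ l.depth - 1 :=
      length_canonicalNodes_suffix_le
    have hr₀ : e ≤ l.numLeaves →
        (r.canonicalNodes (s - l.numLeaves) (e - l.numLeaves)).length = 0 :=
      fun h => length_canonicalNodes_eq_zero (.inl (by omega))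
    have hr₁ : s ≤ l.numLeaves → r.numLeaves ≤ e - l.numLeaves →
        (r.canonicalNodes (s - l.numLeaves) (e - l.numLeaves)).length = 1 :=
      fun h => Nat.sub_eq_zero_of_le h ▸ length_canonicalNodes_zero
    have hr₂ : s ≤ l.numLeaves → e - l.numLeaves < r.numLeaves →
        (r.canonicalNodes (s - l.numLeaves) (e - l.numLeaves)).length ≤ r.depth - 1 :=
      fun h => Nat.sub_eq_zero_of_le h ▸ length_canonicalNodes_prefix_le
    have := ihl s e
    have := ihr (s - l.numLeaves) (e - l.numLeaves)
    have := l.one_le_depth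
    have := r.one_le_depth
    simp only [depth]
    omega

end BinTree

lemma pairLE_antisymm {u v u' v' : Pos} (huv : ¬ u <+: v) (hvu : ¬ v <+: u)
    (h : PairLE u v u' v') (h' : PairLE u' v' u v) : s(u, v) = s(u', v') := by
  rcases h with ⟨h₁, h₂⟩ | ⟨h₁, h₂⟩ <;> rcases h' with ⟨h₁', h₂'⟩ | ⟨h₁', h₂'⟩
  · rw [h₁.eq_of_length_le h₁'.length_le, h₂.eq_of_length_le h₂'.length_le]
  · exact absurd (h₁.trans h₂') huv
  · exact absurd (h₁.trans h₁') hvu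
  · rw [h₁.eq_of_length_le h₂'.length_le, h₂.eq_of_length_le h₁'.length_le, Sym2.eq_swap]

namespace STM

lemma transversal_of_mem {N : STM} {u v : Pos} (h : s(u, v) ∈ N.A ∪ N.B) :
    Transversal N.tree u v :=
  N.transversal _ h u v rfl

lemma finite_pairs (N : STM) : (N.A ∪ N.B).Finite := by
  refine ((N.tree.finite_setOf_isNode.prod N.tree.finite_setOf_isNode).image
    fun w => s(w.1, w.2)).subset fun e he => ?_
  induction e using Sym2.ind with
  | _ u v =>
    have h := transversal_of_mem he
    exact ⟨(u, v), ⟨h.1, h.2.1⟩, rfl⟩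

lemma eq_or_eq_of_prefix {N : STM} {a b u v : Pos} (hab : s(a, b) ∈ N.A ∪ N.B)
    (huv : s(u, v) ∈ N.A ∪ N.B) (hau : a <+: u) (hvb : v <+: b) : a = u ∨ v = b := by
  by_contra! h
  exact N.noCross _ hab _ huv a b u v rfl rfl ⟨⟨hau, h.1⟩, hvb, h.2⟩

lemma prefix_and_prefix_or_prefix_and_prefix {N : STM} {a b u v P Q : Pos}
    (hab : s(a, b) ∈ N.A ∪ N.B) (huv : s(u, v) ∈ N.A ∪ N.B)
    (ha : a <+: P) (hb : b <+: Q) (hu : u <+: P) (hv : v <+: Q) :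
    (a <+: u ∧ b <+: v) ∨ (u <+: a ∧ v <+: b) := by
  rcases List.prefix_or_prefix_of_prefix ha hu with hau | hua <;>
    rcases List.prefix_or_prefix_of_prefix hb hv with hbv | hvb
  · exact .inl ⟨hau, hbv⟩
  · rcases eq_or_eq_of_prefix hab huv hau hvb with rfl | rfl
    · exact .inr ⟨List.prefix_refl _, hvb⟩
    · exact .inl ⟨hau, List.prefix_refl _⟩
  · rcases eq_or_eq_of_prefix huv hab hua hbv with rfl | rfl
    · exact .inl ⟨List.prefix_refl _, hbv⟩
    · exact .inr ⟨hua, List.prefix_refl _⟩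
  · exact .inr ⟨hua, hvb⟩

structure IsTopBelow (N : STM) (P Q u v : Pos) : Prop where
  mem : s(u, v) ∈ N.A ∪ N.B
  prefix_left : u <+: P
  prefix_right : v <+: Q
  le : ∀ a b, s(a, b) ∈ N.A ∪ N.B → a <+: P → b <+: Q → a <+: u ∧ b <+: v

lemma exists_isTopBelow {N : STM} {P Q a b : Pos} (hab : s(a, b) ∈ N.A ∪ N.B) (ha : a <+: P)
    (hb : b <+: Q) : ∃ u v, N.IsTopBelow P Q u v := by
  set S := {w : Pos × Pos | s(w.1, w.2) ∈ N.A ∪ N.B ∧ w.1 <+: P ∧ w.2 <+: Q}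
  have hS : S.Finite :=
    ((List.finite_length_le Bool P.length).prod (List.finite_length_le Bool Q.length)).subset
      fun w hw => ⟨hw.2.1.length_le, hw.2.2.length_le⟩
  obtain ⟨⟨u, v⟩, ⟨huv, hu, hv⟩, hmax⟩ :=
    S.exists_max_image (fun w => w.1.length + w.2.length) hS ⟨(a, b), hab, ha, hb⟩
  refine ⟨u, v, huv, hu, hv, fun a' b' h ha' hb' => ?_⟩
  rcases prefix_and_prefix_or_prefix_and_prefix h huv ha' hb' hu hv with h' | ⟨hua, hvb⟩
  · exact h'
  · have := hmax (a', b') ⟨h, ha', hb'⟩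
    have := hua.length_le
    have := hvb.length_le
    dsimp only at *
    obtain rfl := hua.eq_of_length (by omega)
    obtain rfl := hvb.eq_of_length (by omega)
    exact ⟨List.prefix_refl _, List.prefix_refl _⟩

lemma IsTopBelow.unique {N : STM} {P Q u v u' v' : Pos} (h : N.IsTopBelow P Q u v)
    (h' : N.IsTopBelow P Q u' v') : u = u' ∧ v = v' := by
  obtain ⟨hu, hv⟩ := h.le u' v' h'.mem h'.prefix_left h'.prefix_right
  obtain ⟨hu', hv'⟩ := h'.le u v h.mem h.prefix_left h.prefix_right
  exact ⟨hu'.eq_of_length_le hu.length_le, hv'.eq_of_length_le hv.length_le⟩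

lemma IsTopBelow.pairLE {N : STM} {P Q u v a b : Pos} (h : N.IsTopBelow P Q u v)
    (hab : s(a, b) ∈ N.A ∪ N.B) (hle : PairLE a b P Q) : PairLE a b u v := by
  rcases hle with ⟨ha, hb⟩ | ⟨hb, ha⟩
  · exact .inl (h.le a b hab ha hb)
  · exact .inr (h.le b a (Sym2.eq_swap ▸ hab) hb ha)

lemma leafAdj_iff {N : STM} {P Q : Pos} :
    N.LeafAdj P Q ↔ N.tree.IsLeafPos P ∧ N.tree.IsLeafPos Q ∧
      ∃ u v, s(u, v) ∈ N.B ∧ N.IsTopBelow P Q u v := by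
  refine and_congr_right fun _ => and_congr_right fun _ => ⟨?_, ?_⟩
  · rintro ⟨a, b, habB, hab, hnot⟩
    obtain ⟨u, v, htop⟩ : ∃ u v, N.IsTopBelow P Q u v := by
      rcases hab with ⟨ha, hb⟩ | ⟨hb, ha⟩
      · exact exists_isTopBelow (.inr habB) ha hb
      · exact exists_isTopBelow (Sym2.eq_swap ▸ .inr habB) hb ha
    refine ⟨u, v, htop.mem.resolve_left fun huvA => hnot ⟨u, v, huvA, htop.pairLE (.inr habB) hab,
      fun h => Set.disjoint_left.mp N.disjAB huvA (h ▸ habB),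
      .inl ⟨htop.prefix_left, htop.prefix_right⟩⟩, htop⟩
  · rintro ⟨u, v, huvB, htop⟩
    refine ⟨u, v, huvB, .inl ⟨htop.prefix_left, htop.prefix_right⟩, ?_⟩
    rintro ⟨a, b, habA, hle, hne, habPQ⟩
    have hT := transversal_of_mem (.inr huvB)
    exact hne (pairLE_antisymm hT.2.2.1 hT.2.2.2 hle (htop.pairLE (.inl habA) habPQ))

end STM

open BinTree

/-- Identifying the leaves of `T` and `R` by rank, the nodes of `R` whose leaf sets tile the
leaf set of the node `u` of `T`. -/
def pieces (T R : BinTree) (u : Pos) : List Pos :=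
  R.canonicalNodes (T.leafStart u) (T.leafStart u + T.leafCount u)

section Pieces

variable {T R : BinTree} {u u' v x x' y : Pos}

lemma mem_pieces (hx : x ∈ pieces T R u) :
    R.IsNode x ∧ T.leafStart u ≤ R.leafStart x ∧
      R.leafStart x + R.leafCount x ≤ T.leafStart u + T.leafCount u :=
  mem_canonicalNodes hx

lemma sAnc_of_mem_pieces (hu : T.IsNode u) (hu' : T.IsNode u') (hx : x ∈ pieces T R u)
    (hx' : x' ∈ pieces T R u') (h : SAnc x x') : SAnc u u' := by
  obtain ⟨-, hx₁, hx₂⟩ := mem_pieces hx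
  obtain ⟨hx'R, hx'₁, hx'₂⟩ := mem_pieces hx'
  have := leafInterval_mono hx'R h.1
  have := R.one_le_leafCount x'
  -- otherwise the leaf set of `x` lies in that of `u'`, against the maximality of the piece `x'`
  have hnot : ¬ u' <+: u := fun hu'u => by
    have := leafInterval_mono hu hu'u
    exact not_le_of_mem_canonicalNodes hx' h (by omega)
  refine ⟨(prefix_or_prefix_of_mem_leafInterval hu hu' (k := R.leafStart x') (by omega)
    (by omega)).resolve_right hnot, fun heq => hnot (heq ▸ List.prefix_refl _)⟩

lemma prefix_of_mem_pieces (hu : T.IsNode u) (hu' : T.IsNode u') (hx : x ∈ pieces T R u)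
    (hx' : x' ∈ pieces T R u') (hu'u : u' <+: u) {p : Pos} (hxp : x <+: p) (hx'p : x' <+: p) :
    x' <+: x := by
  rcases List.prefix_or_prefix_of_prefix hx'p hxp with h | h
  · exact h
  · by_contra hne
    have := sAnc_of_mem_pieces hu hu' hx hx' ⟨h, fun e => hne (e ▸ List.prefix_refl _)⟩
    exact this.2 (this.1.eq_of_length_le hu'u.length_le)

lemma Transversal.pieces (huv : Transversal T u v) (hx : x ∈ pieces T R u)
    (hy : y ∈ pieces T R v) : Transversal R x y := by
  obtain ⟨hu, hv, huv', hvu⟩ := huv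
  obtain ⟨hxR, hx₁, hx₂⟩ := mem_pieces hx
  obtain ⟨hyR, hy₁, hy₂⟩ := mem_pieces hy
  have := leafInterval_disjoint hu hv huv' hvu
  have := R.one_le_leafCount x
  have := R.one_le_leafCount y
  refine ⟨hxR, hyR, fun h => ?_, fun h => ?_⟩
  · have := leafInterval_mono hyR h; omega
  · have := leafInterval_mono hxR h; omega

lemma prefix_leafPos_of_mem_pieces (hu : T.IsNode u) (hx : x ∈ pieces T R u) {k : ℕ}
    (hk : k < R.numLeaves) (hxk : x <+: R.leafPos k) : u <+: T.leafPos k := by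
  obtain ⟨hxR, hx₁, hx₂⟩ := mem_pieces hx
  have := (prefix_leafPos_iff hxR).mp ⟨hxk, hk⟩
  exact ((prefix_leafPos_iff hu).mpr (by omega)).1

lemma exists_mem_pieces_prefix (hu : T.IsNode u) {k : ℕ} (hkT : k < T.numLeaves)
    (hkR : k < R.numLeaves) (huk : u <+: T.leafPos k) :
    ∃ x ∈ pieces T R u, x <+: R.leafPos k := by
  have := (prefix_leafPos_iff hu).mp ⟨huk, hkT⟩
  exact exists_mem_canonicalNodes_prefix hkR this.1 this.2

end Pieces

namespace STM

variable (M : STM) (R : BinTree)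

structure IsTopSource (u v x y : Pos) : Prop where
  mem : s(u, v) ∈ M.A ∪ M.B
  mem_pieces_left : x ∈ pieces M.tree R u
  mem_pieces_right : y ∈ pieces M.tree R v
  le : ∀ a b, s(a, b) ∈ M.A ∪ M.B → x ∈ pieces M.tree R a → y ∈ pieces M.tree R b →
    a <+: u ∧ b <+: v

variable {M R}

lemma IsTopSource.symm {u v x y : Pos} (h : M.IsTopSource R u v x y) :
    M.IsTopSource R v u y x :=
  ⟨Sym2.eq_swap ▸ h.mem, h.mem_pieces_right, h.mem_pieces_left,
    fun a b hab ha hb => (h.le b a (Sym2.eq_swap ▸ hab) hb ha).symm⟩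

lemma IsTopSource.unique {u v u' v' x y : Pos} (h : M.IsTopSource R u v x y)
    (h' : M.IsTopSource R u' v' x y) : u = u' ∧ v = v' := by
  obtain ⟨hu, hv⟩ := h.le u' v' h'.mem h'.mem_pieces_left h'.mem_pieces_right
  obtain ⟨hu', hv'⟩ := h'.le u v h.mem h.mem_pieces_left h.mem_pieces_right
  exact ⟨hu'.eq_of_length_le hu.length_le, hv'.eq_of_length_le hv.length_le⟩

variable (M R)

def transplantPairs (S : Set (Sym2 Pos)) : Set (Sym2 Pos) :=
  {e | ∃ u v x y, s(u, v) ∈ S ∧ M.IsTopSource R u v x y ∧ e = s(x, y)}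

variable {M R}

lemma mem_transplantPairs {S : Set (Sym2 Pos)} {x y : Pos} :
    s(x, y) ∈ M.transplantPairs R S ↔ ∃ u v, s(u, v) ∈ S ∧ M.IsTopSource R u v x y := by
  refine ⟨fun ⟨u, v, x', y', hS, h, he⟩ => ?_, fun ⟨u, v, hS, h⟩ => ⟨u, v, x, y, hS, h, rfl⟩⟩
  rcases Sym2.eq_iff.mp he with ⟨rfl, rfl⟩ | ⟨rfl, rfl⟩
  · exact ⟨u, v, hS, h⟩
  · exact ⟨v, u, Sym2.eq_swap ▸ hS, h.symm⟩

lemma exists_isTopSource_of_mem {x y : Pos}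
    (h : s(x, y) ∈ M.transplantPairs R M.A ∪ M.transplantPairs R M.B) :
    ∃ u v, M.IsTopSource R u v x y := by
  rcases h with h | h <;>
  · obtain ⟨u, v, -, h⟩ := mem_transplantPairs.mp h
    exact ⟨u, v, h⟩

variable (M R)

def transplant : STM where
  tree := R
  A := M.transplantPairs R M.A
  B := M.transplantPairs R M.B
  disjAB := by
    refine Set.disjoint_left.mpr fun e hA hB => ?_
    induction e using Sym2.ind with
    | _ x y =>
      obtain ⟨u, v, huvA, h⟩ := mem_transplantPairs.mp hA
      obtain ⟨u', v', huvB, h'⟩ := mem_transplantPairs.mp hB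
      obtain ⟨rfl, rfl⟩ := h.unique h'
      exact Set.disjoint_left.mp M.disjAB huvA huvB
  transversal := by
    rintro e he x y rfl
    obtain ⟨u, v, h⟩ := exists_isTopSource_of_mem he
    exact (transversal_of_mem h.mem).pieces h.mem_pieces_left h.mem_pieces_right
  noCross := by
    rintro e he e' he' x y x' y' rfl rfl ⟨hxx', hy'y⟩
    obtain ⟨u, v, h⟩ := exists_isTopSource_of_mem he
    obtain ⟨u', v', h'⟩ := exists_isTopSource_of_mem he'
    have hT := transversal_of_mem h.mem
    have hT' := transversal_of_mem h'.mem
    exact M.noCross _ h.mem _ h'.mem u v u' v' rfl rfl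
      ⟨sAnc_of_mem_pieces hT.1 hT'.1 h.mem_pieces_left h'.mem_pieces_left hxx',
        sAnc_of_mem_pieces hT'.2.1 hT.2.1 h'.mem_pieces_right h.mem_pieces_right hy'y⟩

variable {M R} {k l : ℕ}

lemma IsTopBelow.transplant (hk : k < R.numLeaves) (hl : l < R.numLeaves) {u v x y : Pos}
    (htop : M.IsTopBelow (M.tree.leafPos k) (M.tree.leafPos l) u v)
    (hx : x ∈ pieces M.tree R u) (hxk : x <+: R.leafPos k)
    (hy : y ∈ pieces M.tree R v) (hyl : y <+: R.leafPos l) :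
    M.IsTopSource R u v x y ∧ (M.transplant R).IsTopBelow (R.leafPos k) (R.leafPos l) x y := by
  have hT := transversal_of_mem htop.mem
  have hsrc : M.IsTopSource R u v x y := ⟨htop.mem, hx, hy, fun a b hab ha hb =>
    htop.le a b hab (prefix_leafPos_of_mem_pieces (transversal_of_mem hab).1 ha hk hxk)
      (prefix_leafPos_of_mem_pieces (transversal_of_mem hab).2.1 hb hl hyl)⟩
  refine ⟨hsrc, ?_, hxk, hyl, fun a b hab ha hb => ?_⟩
  · rcases htop.mem with h | h
    · exact .inl (mem_transplantPairs.mpr ⟨u, v, h, hsrc⟩)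
    · exact .inr (mem_transplantPairs.mpr ⟨u, v, h, hsrc⟩)
  · obtain ⟨u', v', h⟩ := exists_isTopSource_of_mem hab
    have hT' := transversal_of_mem h.mem
    obtain ⟨hu'u, hv'v⟩ := htop.le u' v' h.mem
      (prefix_leafPos_of_mem_pieces hT'.1 h.mem_pieces_left hk ha)
      (prefix_leafPos_of_mem_pieces hT'.2.1 h.mem_pieces_right hl hb)
    exact ⟨prefix_of_mem_pieces hT.1 hT'.1 hx h.mem_pieces_left hu'u hxk ha,
      prefix_of_mem_pieces hT.2.1 hT'.2.1 hy h.mem_pieces_right hv'v hyl hb⟩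

theorem leafAdj_transplant_iff (hR : M.tree.numLeaves = R.numLeaves) (hk : k < R.numLeaves)
    (hl : l < R.numLeaves) :
    (M.transplant R).LeafAdj (R.leafPos k) (R.leafPos l) ↔
      M.LeafAdj (M.tree.leafPos k) (M.tree.leafPos l) := by
  have hkT : k < M.tree.numLeaves := hk.trans_eq hR.symm
  have hlT : l < M.tree.numLeaves := hl.trans_eq hR.symm
  rw [leafAdj_iff, leafAdj_iff]
  refine and_congr (iff_of_true (isLeafPos_leafPos hk) (isLeafPos_leafPos hkT))
    (and_congr (iff_of_true (isLeafPos_leafPos hl) (isLeafPos_leafPos hlT)) ⟨?_, ?_⟩)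
  · rintro ⟨x, y, hxyB, htop'⟩
    obtain ⟨u₀, v₀, hB, hsrc₀⟩ := mem_transplantPairs.mp hxyB
    have hT₀ := transversal_of_mem hsrc₀.mem
    obtain ⟨u, v, htop⟩ := exists_isTopBelow hsrc₀.mem
      (prefix_leafPos_of_mem_pieces hT₀.1 hsrc₀.mem_pieces_left hk htop'.prefix_left)
      (prefix_leafPos_of_mem_pieces hT₀.2.1 hsrc₀.mem_pieces_right hl htop'.prefix_right)
    have hT := transversal_of_mem htop.mem
    obtain ⟨x', hx', hx'k⟩ := exists_mem_pieces_prefix hT.1 hkT hk htop.prefix_left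
    obtain ⟨y', hy', hy'l⟩ := exists_mem_pieces_prefix hT.2.1 hlT hl htop.prefix_right
    obtain ⟨hsrc, htop''⟩ := htop.transplant hk hl hx' hx'k hy' hy'l
    obtain ⟨rfl, rfl⟩ := htop''.unique htop'
    obtain ⟨rfl, rfl⟩ := hsrc.unique hsrc₀
    exact ⟨u, v, hB, htop⟩
  · rintro ⟨u, v, hB, htop⟩
    have hT := transversal_of_mem htop.mem
    obtain ⟨x, hx, hxk⟩ := exists_mem_pieces_prefix hT.1 hkT hk htop.prefix_left
    obtain ⟨y, hy, hyl⟩ := exists_mem_pieces_prefix hT.2.1 hlT hl htop.prefix_right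
    obtain ⟨hsrc, htop'⟩ := htop.transplant hk hl hx hxk hy hyl
    exact ⟨x, y, mem_transplantPairs.mpr ⟨u, v, hB, hsrc⟩, htop'⟩

lemma Models.numLeaves_eq {V : Type*} [Fintype V] {G : SimpleGraph V} (hM : M.Models G) :
    M.tree.numLeaves = Fintype.card V := by
  obtain ⟨f, hinj, hleaf, hsurj, -⟩ := hM
  have hf v := (hleaf v).leafPos_leafStart
  let g : V → Fin M.tree.numLeaves := fun v => ⟨M.tree.leafStart (f v), (hf v).1⟩
  have hg : g.Bijective := by
    refine ⟨fun a b hab => hinj ?_, fun j => ?_⟩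
    · rw [← (hf a).2, ← (hf b).2]
      exact congrArg _ (Fin.val_eq_of_eq hab)
    · obtain ⟨v, hv⟩ := hsurj _ (isLeafPos_leafPos j.2)
      exact ⟨v, Fin.ext (by simp [g, hv, leafStart_leafPos j.2])⟩
  simpa using (Fintype.card_of_bijective hg).symm

theorem Models.transplant {V : Type*} {G : SimpleGraph V} (hM : M.Models G)
    (hR : M.tree.numLeaves = R.numLeaves) : (M.transplant R).Models G := by
  obtain ⟨f, hinj, hleaf, hsurj, hadj⟩ := hM
  have hf v := (hleaf v).leafPos_leafStart
  have hfR v : M.tree.leafStart (f v) < R.numLeaves := (hf v).1.trans_eq hR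
  refine ⟨fun v => R.leafPos (M.tree.leafStart (f v)), fun a b hab => hinj ?_,
    fun v => isLeafPos_leafPos (hfR v), fun p hp => ?_, fun a b => ?_⟩
  · have := congrArg R.leafStart hab
    simp only [leafStart_leafPos (hfR a), leafStart_leafPos (hfR b)] at this
    rw [← (hf a).2, ← (hf b).2, this]
  · obtain ⟨hpR, hp⟩ := (show R.IsLeafPos p from hp).leafPos_leafStart
    obtain ⟨v, hv⟩ := hsurj _ (isLeafPos_leafPos (hpR.trans_eq hR.symm))
    exact ⟨v, by dsimp only; rw [hv, leafStart_leafPos (hpR.trans_eq hR.symm), hp]⟩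
  · rw [leafAdj_transplant_iff hR (hfR a) (hfR b), (hf a).2, (hf b).2]
    exact hadj a b

def piecePairs (T R : BinTree) : Sym2 Pos → Finset (Sym2 Pos) :=
  Sym2.lift ⟨fun u v => Finset.image₂ (fun x y => s(x, y)) (pieces T R u).toFinset
    (pieces T R v).toFinset, fun u v => by
      dsimp only; rw [Finset.image₂_swap]; simp_rw [Sym2.eq_swap]⟩

variable (M R)

lemma ncard_transplant_le {c : ℕ} (hc : ∀ s e, (R.canonicalNodes s e).length ≤ c) :
    ((M.transplant R).A ∪ (M.transplant R).B).ncard ≤ (M.A ∪ M.B).ncard * c ^ 2 := by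
  have hfin := M.finite_pairs
  have hsub : (M.transplant R).A ∪ (M.transplant R).B ⊆
      ↑(hfin.toFinset.biUnion (piecePairs M.tree R)) := by
    intro e he
    induction e using Sym2.ind with
    | _ x y =>
      obtain ⟨u, v, h⟩ := exists_isTopSource_of_mem he
      simp only [Finset.coe_biUnion, Finset.mem_coe, Set.Finite.mem_toFinset, Set.mem_iUnion]
      refine ⟨s(u, v), h.mem, ?_⟩
      simp only [piecePairs, Sym2.lift_mk, Finset.mem_image₂, List.mem_toFinset]
      exact ⟨x, h.mem_pieces_left, y, h.mem_pieces_right, rfl⟩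
  have hcard e : (piecePairs M.tree R e).card ≤ c ^ 2 := by
    induction e using Sym2.ind with
    | _ u v =>
      calc (piecePairs M.tree R s(u, v)).card
          ≤ (pieces M.tree R u).toFinset.card * (pieces M.tree R v).toFinset.card :=
            Finset.card_image₂_le _ _ _
        _ ≤ c * c := Nat.mul_le_mul ((List.toFinset_card_le _).trans (hc _ _))
            ((List.toFinset_card_le _).trans (hc _ _))
        _ = c ^ 2 := (sq c).symm
  calc ((M.transplant R).A ∪ (M.transplant R).B).ncard
      ≤ (hfin.toFinset.biUnion (piecePairs M.tree R)).card :=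
        (Set.ncard_le_ncard hsub (Finset.finite_toSet _)).trans_eq (Set.ncard_coe_finset _)
    _ ≤ ∑ e ∈ hfin.toFinset, (piecePairs M.tree R e).card := Finset.card_biUnion_le
    _ ≤ hfin.toFinset.card • c ^ 2 := Finset.sum_le_card_nsmul _ _ _ fun e _ => hcard e
    _ = (M.A ∪ M.B).ncard * c ^ 2 := by rw [smul_eq_mul, Set.ncard_eq_toFinset_card _ hfin]

end STM

lemma max_one_two_mul_clog_sub_one_le_logb {n : ℕ} (hn : 2 ≤ n) :
    ((max 1 (2 * (Nat.clog 2 n - 1)) : ℕ) : ℝ) ≤ 2 * Real.logb 2 n := by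
  have hlog : 1 ≤ Real.logb 2 n := by
    rw [Real.le_logb_iff_rpow_le one_lt_two (by positivity)]
    simpa using (Nat.cast_le (α := ℝ)).mpr hn
  have hclog : (Nat.clog 2 n : ℝ) < Real.logb 2 n + 1 := by
    have := Real.natCeil_logb_natCast 2 n
    push_cast at this
    exact this ▸ Nat.ceil_lt_add_one (by linarith)
  have := Nat.clog_pos one_lt_two hn
  rw [Nat.cast_max, Nat.cast_mul, Nat.cast_sub (by omega)]
  push_cast
  exact max_le (by linarith) (by linarith)

theorem balance_stm_general (n : ℕ) (hn : 2 ≤ n) (G : SimpleGraph (Fin n)) (d : ℕ)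
    (M : STM) (hM : M.Models G)
    (hsparse : (M.A ∪ M.B).ncard ≤ d * M.tree.numNodes) :
    ∃ M' : STM, M'.Models G ∧ BinTree.IsComplete M'.tree ∧
      M'.tree.leaves.length = n ∧ M'.tree.depth = Nat.clog 2 n + 1 ∧
      ((M'.A ∪ M'.B).ncard : ℝ) ≤ 4 * d * (Real.logb 2 n) ^ 2 * M'.tree.numNodes := by
  obtain ⟨R, hRc, hRn, hRd⟩ := exists_isComplete hn
  have hTR : M.tree.numLeaves = R.numLeaves := by rw [hM.numLeaves_eq, Fintype.card_fin, hRn]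
  refine ⟨M.transplant R, hM.transplant hTR, hRc, R.length_leaves.trans hRn, hRd, ?_⟩
  have hcount := M.ncard_transplant_le R R.length_canonicalNodes_le
  have hnodes : M.tree.numNodes = R.numNodes := by rw [numNodes_eq, numNodes_eq, hTR]
  have hc := max_one_two_mul_clog_sub_one_le_logb hn
  rw [hRd, show Nat.clog 2 n + 1 - 2 = Nat.clog 2 n - 1 by omega] at hcount
  calc (((M.transplant R).A ∪ (M.transplant R).B).ncard : ℝ)
      ≤ (M.A ∪ M.B).ncard * ((max 1 (2 * (Nat.clog 2 n - 1)) : ℕ) : ℝ) ^ 2 := by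
        exact_mod_cast hcount
    _ ≤ (d * R.numNodes : ℕ) * (2 * Real.logb 2 n) ^ 2 := by
        gcongr
        exact_mod_cast hnodes ▸ hsparse
    _ = 4 * d * (Real.logb 2 n) ^ 2 * R.numNodes := by push_cast; ring

/-- Balancing: if an `n`-vertex graph `G` (with `n ≥ 2`) has a clean `d`-sparse signed tree
model, then it has a `4d·(log₂ n)²`-sparse signed tree model whose tree is the full complete
binary rooted tree with `n` leaves, of depth `⌈log₂ n⌉ + 1`. -/
theorem balance_stm (n : ℕ) (hn : 2 ≤ n) (G : SimpleGraph (Fin n)) (d : ℕ)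
    (M : STM) (hM : M.Models G) (hclean : M.Clean)
    (hsparse : (M.A ∪ M.B).ncard ≤ d * M.tree.numNodes) :
    ∃ M' : STM, M'.Models G ∧ BinTree.IsComplete M'.tree ∧
      M'.tree.leaves.length = n ∧ M'.tree.depth = Nat.clog 2 n + 1 ∧
      ((M'.A ∪ M'.B).ncard : ℝ) ≤ 4 * d * (Real.logb 2 n) ^ 2 * M'.tree.numNodes :=
  balance_stm_general n hn G d M hM hsparse
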